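/- arXiv:math/0310366 — 3 statements merged into one kernel-verified Lean document; each statement's English description precedes it below -/
import Mathlib

section
/- Let E and V be finite sets, let h, t : E → V assign to each directed edge its head and its tail, and let Int ⊆ V be a set of internal vertices. Suppose every internal vertex v ∈ Int has exactly one incoming edge (card {e : E | h e = v} = 1) and exactly two outgoing edges (card {e : E | t e = v} = 2), and suppose every external vertex v ∉ Int is the endpoint of exactly one edge-end (card {e : E | h e = v} + card {e : E | t e = v} = 1). Then the number of external vertices is at least the degree: card {v : V | v ∉ Int} ≥ card E − card Int. -/
/-- A legally directed degree-n diagram has at least n external vertices: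
if every internal vertex has exactly one incoming and two outgoing edges, and every
external vertex carries exactly one edge-end, then the number of external vertices
is at least card E - card Int. -/
theorem external_vertices_ge_degree {E V : Type*} [Fintype E] [Fintype V] [DecidableEq V]
    (h t : E → V) (Int : Finset V)
    (hin : ∀ v ∈ Int, (Finset.univ.filter (fun e : E => h e = v)).card = 1)
    (hout : ∀ v ∈ Int, (Finset.univ.filter (fun e : E => t e = v)).card = 2)
    (hext : ∀ v : V, v ∉ Int →
      (Finset.univ.filter (fun e : E => h e = v)).card
        + (Finset.univ.filter (fun e : E => t e = v)).card = 1) :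
    (Finset.univ.filter (fun v : V => v ∉ Int)).card ≥ Fintype.card E - Int.card := by
  classical
  have hcard : Fintype.card E
      = ∑ v ∈ (Finset.univ : Finset V),
          (Finset.univ.filter (fun e : E => h e = v)).card := by
    rw [← Finset.card_univ]
    exact Finset.card_eq_sum_card_fiberwise (fun e _ => Finset.mem_univ (h e))
  have hsplit :
      ∑ v ∈ (Finset.univ : Finset V).filter (fun v => v ∈ Int),
          (Finset.univ.filter (fun e : E => h e = v)).card
        + ∑ v ∈ (Finset.univ : Finset V).filter (fun v => v ∉ Int),
          (Finset.univ.filter (fun e : E => h e = v)).card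
      = Fintype.card E := by
    rw [hcard]
    exact Finset.sum_filter_add_sum_filter_not _ _ _
  have hIntsum :
      ∑ v ∈ (Finset.univ : Finset V).filter (fun v => v ∈ Int),
          (Finset.univ.filter (fun e : E => h e = v)).card = Int.card := by
    have : (Finset.univ : Finset V).filter (fun v => v ∈ Int) = Int := by
      ext v; simp
    rw [this]
    rw [Finset.sum_congr rfl hin]
    simp
  have hExtsum :
      ∑ v ∈ (Finset.univ : Finset V).filter (fun v => v ∉ Int),
          (Finset.univ.filter (fun e : E => h e = v)).card
        ≤ ((Finset.univ : Finset V).filter (fun v => v ∉ Int)).card := by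
    rw [Finset.card_eq_sum_ones]
    refine Finset.sum_le_sum fun v hv => ?_
    have hv' : v ∉ Int := (Finset.mem_filter.mp hv).2
    have := hext v hv'
    omega
  omega
end

section
/- Let E and V be finite sets, let h, t : E → V assign to each directed edge its head and its tail, and let Int ⊆ V be a set of internal vertices. Suppose every internal vertex v ∈ Int has exactly one incoming edge (card {e : E | h e = v} = 1) and exactly two outgoing edges (card {e : E | t e = v} = 2), every external vertex v ∉ Int is the endpoint of exactly one edge-end (card {e : E | h e = v} + card {e : E | t e = v} = 1), and the configuration satisfies the tree count card E + 1 = card V. Then exactly one edge has its tail at an external vertex: card {e : E | t e ∉ Int} = 1. -/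
/-!
Double counting. Counting edges by their heads gives `#E = #Int + a` and counting them by their
tails gives `#E = 2 #Int + b`, where `a` and `b` are the numbers of edges with head, resp. tail,
outside `Int`. Each external vertex carries exactly one edge-end, so `a + b = #V - #Int`.
Adding the two counts and using `#V = #E + 1` gives `#E = 2 #Int + 1`, hence `b = 1`.
-/

open Finset

namespace DiagramCount

variable {E V : Type*} [Fintype E] [DecidableEq V]

theorem card_filter_notMem_add_mul_card (f : E → V) (S : Finset V) {k : ℕ}
    (hk : ∀ v ∈ S, #{e | f e = v} = k) :
    #{e | f e ∉ S} + #S * k = Fintype.card E := by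
  rw [← sum_const_nat hk, sum_card_fiberwise_eq_card_filter, add_comm]
  exact card_filter_add_card_filter_not _

theorem card_filter_notMem_add_card_filter_notMem [Fintype V] (h t : E → V) (S : Finset V)
    (hS : ∀ v ∉ S, #{e | h e = v} + #{e | t e = v} = 1) :
    #{e | h e ∉ S} + #{e | t e ∉ S} = #Sᶜ := by
  have hsum : ∑ v ∈ Sᶜ, (#{e | h e = v} + #{e | t e = v}) = #Sᶜ := by
    simpa using sum_const_nat fun v hv => hS v (mem_compl.mp hv)
  simpa only [sum_add_distrib, sum_card_fiberwise_eq_card_filter, mem_compl] using hsum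

end DiagramCount

open DiagramCount in
/-- A legally directed tree diagram has exactly one leg pointing from the base loop
inwards: if every internal vertex has exactly one incoming and two outgoing edges,
every external vertex carries exactly one edge-end, and card E + 1 = card V, then
exactly one edge has its tail at an external vertex. -/
theorem tree_one_inward_leg {E V : Type*} [Fintype E] [Fintype V] [DecidableEq V]
    (h t : E → V) (Int : Finset V)
    (hin : ∀ v ∈ Int, (Finset.univ.filter (fun e : E => h e = v)).card = 1)
    (hout : ∀ v ∈ Int, (Finset.univ.filter (fun e : E => t e = v)).card = 2)
    (hext : ∀ v : V, v ∉ Int →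
      (Finset.univ.filter (fun e : E => h e = v)).card
        + (Finset.univ.filter (fun e : E => t e = v)).card = 1)
    (hTree : Fintype.card E + 1 = Fintype.card V) :
    (Finset.univ.filter (fun e : E => t e ∉ Int)).card = 1 := by
  have by_heads := card_filter_notMem_add_mul_card h Int hin
  have by_tails := card_filter_notMem_add_mul_card t Int hout
  have external := card_filter_notMem_add_card_filter_notMem h t Int hext
  have hcompl := card_add_card_compl Int
  omega
end

section
/- Fix m ≥ 1 and encode a directing of the m-wheel diagram by functions ε, δ : ZMod m → Bool, where ε i = true iff the cycle edge joining internal vertex i to internal vertex i+1 is directed from i to i+1, and δ i = true iff the pendant edge at internal vertex i is directed from i towards the base loop. Then the directing is legal, i.e. for every i ∈ ZMod m one has (if ε (i−1) then 1 else 0) + (if ε i then 0 else 1) + (if δ i then 0 else 1) = 1, if and only if δ i = true for all i and ε is constant. In particular every m-wheel has exactly two legal directings, and in each of them all external legs point towards the base loop. -/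
lemma wheel_key (m : ℕ) (hm : 1 ≤ m) (ε δ : ZMod m → Bool) :
    (∀ i : ZMod m,
        (if ε (i - 1) then 1 else 0) + (if ε i then 0 else 1)
          + (if δ i then 0 else 1) = 1)
      ↔ ((∀ i, δ i = true) ∧ ∀ i j, ε i = ε j) := by
  haveI : NeZero m := ⟨by omega⟩
  constructor
  · intro h
    have hA : ∀ i : ZMod m, ε i = true → ε (i + 1) = true := by
      intro i hi
      have hc := h (i + 1)
      rw [add_sub_cancel_right, hi] at hc
      by_contra hcon
      rw [Bool.not_eq_true] at hcon
      cases hd : δ (i + 1) <;> simp [hcon, hd] at hc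
    have hε : ∀ i j : ZMod m, ε i = ε j := by
      by_cases hfalse : ∀ i, ε i = false
      · intro i j; rw [hfalse i, hfalse j]
      · push_neg at hfalse
        obtain ⟨i, hi⟩ := hfalse
        replace hi : ε i = true := by simpa using hi
        have hall : ∀ n : ℕ, ε (i + (n : ZMod m)) = true := by
          intro n
          induction n with
          | zero => simpa using hi
          | succ k ih =>
            push_cast
            rw [← add_assoc]
            exact hA _ ih
        have htrue : ∀ j : ZMod m, ε j = true := by
          intro j
          have := hall (j - i).val
          rwa [ZMod.natCast_rightInverse (j - i),
            show i + (j - i) = j from by ring] at this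
        intro a b; rw [htrue a, htrue b]
    refine ⟨?_, hε⟩
    intro i
    have hc := h i
    have he : ε (i - 1) = ε i := hε _ _
    rw [he] at hc
    cases hεi : ε i <;> cases hd : δ i <;> simp [hεi, hd] at hc ⊢
  · rintro ⟨hδ, hε⟩ i
    have h2 := hε (i - 1) i
    rw [h2]
    cases hb : ε i <;> simp [hb, hδ i]

/-- A directing of the m-wheel, encoded by `ε` (cycle edges: `ε i = true` iff the edge
from internal vertex `i` to `i+1` is directed from `i` to `i+1`) and `δ` (pendant legs:
`δ i = true` iff the leg at vertex `i` points towards the base loop), is legal (every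
internal vertex has exactly one incoming edge) iff all legs point towards the base loop
and `ε` is constant.  In particular the m-wheel has exactly two legal directings. -/
theorem wheel_legal_directings (m : ℕ) (hm : 1 ≤ m) :
    (∀ ε δ : ZMod m → Bool,
      ((∀ i : ZMod m,
          (if ε (i - 1) then 1 else 0) + (if ε i then 0 else 1)
            + (if δ i then 0 else 1) = 1)
        ↔ ((∀ i, δ i = true) ∧ ∀ i j, ε i = ε j)))
    ∧ Nat.card {p : (ZMod m → Bool) × (ZMod m → Bool) //
        ∀ i : ZMod m,
          (if p.1 (i - 1) then 1 else 0) + (if p.1 i then 0 else 1)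
            + (if p.2 i then 0 else 1) = 1} = 2 := by
  refine ⟨fun ε δ => wheel_key m hm ε δ, ?_⟩
  have e : {p : (ZMod m → Bool) × (ZMod m → Bool) //
      ∀ i : ZMod m,
        (if p.1 (i - 1) then 1 else 0) + (if p.1 i then 0 else 1)
          + (if p.2 i then 0 else 1) = 1} ≃ Bool :=
    { toFun := fun p => p.1.1 0
      invFun := fun b =>
        ⟨(fun _ => b, fun _ => true), by
          refine (wheel_key m hm _ _).mpr ⟨fun i => rfl, fun i j => rfl⟩⟩
      left_inv := by
        rintro ⟨⟨ε, δ⟩, hp⟩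
        have hc := (wheel_key m hm ε δ).mp hp
        refine Subtype.ext (Prod.ext (funext fun i => ?_) (funext fun i => ?_))
        · exact hc.2 0 i
        · exact (hc.1 i).symm
      right_inv := fun b => rfl }
  rw [Nat.card_congr e, Nat.card_eq_fintype_card, Fintype.card_bool]
end
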